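/- arXiv:1404.0315 — 2 statements merged into one kernel-verified Lean document; each statement's English description precedes it below -/
import Mathlib

section
/- Let M be a compact contact manifold of dimension 2m+1 with contact form η and Reeb vector field ξ. Then there is no (2m-1)-form Ω on M such that the interior product of ξ with Ω vanishes (i.e., Ω is horizontal) and dΩ = (dη)^m; that is, (dη)^m cannot equal dΩ for any horizontal (2m-1)-form Ω. -/
theorem no_basic_primitive_of_top_power
    (m : ℕ) (hm : 1 ≤ m)
    (F : Type*) [Ring F] [Algebra ℝ F]
    (G : ℕ → Submodule ℝ F)
    (d iξ : F →ₗ[ℝ] F) (integral : F →ₗ[ℝ] ℝ)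
    (η Ω : F)
    (hη : η ∈ G 1) (hΩmem : Ω ∈ G (2 * m - 1))
    (hmul : ∀ (p q : ℕ) (a b : F), a ∈ G p → b ∈ G q → a * b ∈ G (p + q))
    (hdmem : ∀ (p : ℕ) (a : F), a ∈ G p → d a ∈ G (p + 1))
    (stokes : ∀ β : F, integral (d β) = 0)
    (hvol : integral (η * (d η) ^ m) ≠ 0)
    (hleib : d (η * Ω) = d η * Ω - η * d Ω)
    (hiξdη : iξ (d η) = 0) (hiξΩ : iξ Ω = 0)
    (hiξmul : ∀ a b : F, iξ a = 0 → iξ b = 0 → iξ (a * b) = 0)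
    (htop : ∀ α ∈ G (2 * m + 1), iξ α = 0 → α = 0)
    (hdΩ : d Ω = (d η) ^ m) :
    False := by
  have hdη : d η ∈ G 2 := hdmem 1 η hη
  have hmem : d η * Ω ∈ G (2 * m + 1) := by
    have := hmul 2 (2 * m - 1) (d η) Ω hdη hΩmem
    have h2 : 2 + (2 * m - 1) = 2 * m + 1 := by omega
    rwa [h2] at this
  have hzero : d η * Ω = 0 := htop _ hmem (hiξmul _ _ hiξdη hiξΩ)
  have : integral (d (η * Ω)) = 0 := stokes _
  rw [hleib, hzero, hdΩ, zero_sub, map_neg, neg_eq_zero] at this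
  exact hvol this
end

section
/- Let V be a real vector space of dimension 2m+1 (m ≥ 1), A a graded-commutative algebra, ω ∈ A_2 a nonzero element with ω^m ≠ 0, and f: V → A_1 ⊕ ℝ·y a linear map into the degree-1 part of the Tievsky algebra T = A ⊗ ℝ[y]/(y²). Suppose f extends to a morphism of graded algebras on the exterior algebra Λ*V, and suppose d f(v) (where d(β+ay)=aω) equals a sum of products f(v_r)·f(v_s) over fewer than 2m+1 fixed basis vectors v_r, v_s with r,s < l, for v = v_l with l ≤ 2m. Then the y-coefficient a_l of f(v_l) is zero. -/
/-!
Let `M` be the span of `f(v_r)` for `r < l`. Its spanning vectors lie in degree 1 and pairwise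
anticommute, so every element of `M` squares to zero, and a product of more than
`dim M ≤ l < 2m` elements of `M` vanishes. The hypothesis puts `a_l ω` in `M ^ 2`, hence
`a_l ^ m ω ^ m = (a_l ω) ^ m ∈ M ^ (2m) = 0`, and `ω ^ m ≠ 0` forces `a_l = 0`.
-/

open Module

namespace Submodule

variable {K R : Type*} [Field K] [Ring R] [Algebra K R]

theorem mul_self_eq_zero_of_mem_span_of_anticomm [CharZero K] {s : Set R}
    (hs : ∀ a ∈ s, ∀ b ∈ s, a * b = -(b * a)) {x : R} (hx : x ∈ span K s) : x * x = 0 := by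
  have anticomm_span : ∀ a ∈ span K s, ∀ b ∈ span K s, a * b = -(b * a) := by
    intro a ha b hb
    induction ha, hb using span_induction₂ with
    | mem_mem a b ha hb => exact hs a ha b hb
    | zero_left => simp
    | zero_right => simp
    | add_left a b c _ _ _ hac hbc => rw [add_mul, mul_add, hac, hbc, neg_add]
    | add_right a b c _ _ _ hab hac => rw [add_mul, mul_add, hab, hac, neg_add]
    | smul_left t a b _ _ hab => rw [smul_mul_assoc, mul_smul_comm, hab, smul_neg]
    | smul_right t a b _ _ hab => rw [smul_mul_assoc, mul_smul_comm, hab, smul_neg]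
  have := IsAddTorsionFree.of_isTorsionFree K R
  exact self_eq_neg.mp (anticomm_span x hx x hx)

/-- Through the exterior algebra of `M`, the product of `k` elements of `M` is an alternating
map, so it vanishes on the linearly dependent families. -/
theorem list_prod_ofFn_eq_zero_of_finrank_lt (M : Submodule K R) [FiniteDimensional K M]
    (hM : ∀ x ∈ M, x * x = 0) {k : ℕ} (hk : finrank K M < k) (v : Fin k → M) :
    (List.ofFn fun i => (v i : R)).prod = 0 := by
  let φ := (ExteriorAlgebra.lift K ⟨M.subtype, fun x => hM x x.2⟩).toLinearMap.compAlternatingMap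
    (ExteriorAlgebra.ιMulti K k)
  have hφ : φ v = (List.ofFn fun i => (v i : R)).prod := by
    simp only [φ, LinearMap.compAlternatingMap_apply, ExteriorAlgebra.ιMulti_apply,
      AlgHom.toLinearMap_apply, map_list_prod, List.map_ofFn, Function.comp_def]
    congr 2
    funext i
    exact ExteriorAlgebra.lift_ι_apply K M.subtype _ (v i)
  have hdep : ¬LinearIndependent K v := fun hv => by
    simpa using hv.fintype_card_le_finrank.trans_lt hk
  rw [← hφ, φ.map_linearDependent v hdep]

theorem pow_eq_bot_of_finrank_lt (M : Submodule K R) [FiniteDimensional K M]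
    (hM : ∀ x ∈ M, x * x = 0) {k : ℕ} (hk : finrank K M < k) : M ^ k = ⊥ := by
  rw [pow_eq_span_pow_set, span_eq_bot]
  intro x hx
  obtain ⟨v, rfl⟩ := Set.mem_pow.mp hx
  exact list_prod_ofFn_eq_zero_of_finrank_lt M hM hk v

theorem pow_eq_zero_of_mem_span_sq_of_anticomm [CharZero K] {s : Finset R}
    (hs : ∀ a ∈ s, ∀ b ∈ s, a * b = -(b * a)) {m : ℕ} (hm : s.card < 2 * m) {z : R}
    (hz : z ∈ span K (s : Set R) ^ 2) : z ^ m = 0 := by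
  have hrank : finrank K (span K (s : Set R)) < 2 * m :=
    (finrank_span_finset_le_card s).trans_lt hm
  have hbot := pow_eq_bot_of_finrank_lt _
    (fun x hx => mul_self_eq_zero_of_mem_span_of_anticomm hs hx) hrank
  have hzm := pow_mem_pow _ hz m
  rwa [← pow_mul, hbot, mem_bot] at hzm

end Submodule

open Submodule in
theorem y_coefficient_vanishes_general
    (m : ℕ)
    (R : Type*) [Ring R] [Algebra ℝ R]
    (G : ℕ → Submodule ℝ R)
    (anticomm : ∀ a b : R, a ∈ G 1 → b ∈ G 1 → a * b = -(b * a))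
    (ω : R) (hωm : ω ^ m ≠ 0)
    (y : R) (hy : y ∈ G 1)
    (β : Fin (2 * m + 1) → R) (hβ : ∀ i, β i ∈ G 1)
    (a : Fin (2 * m + 1) → ℝ)
    (f : Fin (2 * m + 1) → R) (hf : ∀ i, f i = β i + a i • y)
    (γ : Fin (2 * m + 1) → Fin (2 * m + 1) → ℝ)
    (l : Fin (2 * m + 1)) (hl : (l : ℕ) < 2 * m)
    (key : a l • ω =
      -∑ r : Fin (2 * m + 1), ∑ s : Fin (2 * m + 1),
        if r < s ∧ s < l then γ r s • (f r * f s) else 0) :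
    a l = 0 := by
  classical
  set S := (Finset.Iio l).image f
  have hfG : ∀ i, f i ∈ G 1 := fun i => hf i ▸ add_mem (hβ i) (smul_mem _ _ hy)
  have hS : ∀ x ∈ S, ∀ z ∈ S, x * z = -(z * x) := by
    simp only [S, Finset.mem_image]
    rintro _ ⟨i, -, rfl⟩ _ ⟨j, -, rfl⟩
    exact anticomm _ _ (hfG i) (hfG j)
  have hcard : S.card < 2 * m :=
    calc S.card ≤ (Finset.Iio l).card := Finset.card_image_le
      _ = l := Fin.card_Iio l
      _ < 2 * m := hl
  have hmem : a l • ω ∈ span ℝ (S : Set R) ^ 2 := by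
    rw [key, pow_two]
    refine neg_mem (sum_mem fun r _ => sum_mem fun s _ => ?_)
    split_ifs with hrs
    · refine smul_mem _ _ (mul_mem_mul (subset_span ?_) (subset_span ?_)) <;>
        refine Finset.mem_image_of_mem f (Finset.mem_Iio.mpr ?_)
      exacts [hrs.1.trans hrs.2, hrs.2]
    · exact zero_mem _
  have hpow : a l ^ m • ω ^ m = 0 := by
    rw [← smul_pow]
    exact pow_eq_zero_of_mem_span_sq_of_anticomm hS hcard hmem
  exact eq_zero_of_pow_eq_zero ((smul_eq_zero.mp hpow).resolve_right hωm)

theorem y_coefficient_vanishes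
    (m : ℕ) (hm : 1 ≤ m)
    (R : Type*) [Ring R] [Algebra ℝ R]
    (G : ℕ → Submodule ℝ R)
    (anticomm : ∀ a b : R, a ∈ G 1 → b ∈ G 1 → a * b = -(b * a))
    (ω : R) (hω : ω ∈ G 2) (hωm : ω ^ m ≠ 0)
    (ωcomm : ∀ a : R, ω * a = a * ω)
    (y : R) (hy : y ∈ G 1) (hyy : y * y = 0)
    (V : Type*) [AddCommGroup V] [Module ℝ V]
    (hdim : Module.finrank ℝ V = 2 * m + 1)
    (v : Module.Basis (Fin (2 * m + 1)) ℝ V)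
    (β : Fin (2 * m + 1) → R) (hβ : ∀ i, β i ∈ G 1)
    (a : Fin (2 * m + 1) → ℝ)
    (f : Fin (2 * m + 1) → R) (hf : ∀ i, f i = β i + a i • y)
    (γ : Fin (2 * m + 1) → Fin (2 * m + 1) → ℝ)
    (l : Fin (2 * m + 1)) (hl : (l : ℕ) < 2 * m)
    (key : a l • ω =
      -∑ r : Fin (2 * m + 1), ∑ s : Fin (2 * m + 1),
        if r < s ∧ s < l then γ r s • (f r * f s) else 0) :
    a l = 0 :=
  y_coefficient_vanishes_general m R G anticomm ω hωm y hy β hβ a f hf γ l hl key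
end
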